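/- arXiv:0905.1502 — 7 statements merged into one kernel-verified Lean document; each statement's English description precedes it below -/
import Mathlib

section
/- Let N ≥ 2, R > 0 and ε > 0. Let E ⊂ ℝ^N be a linear subspace with dim E = N − 1, let U ⊂ E be an open set contained in the open ball of radius R centred at 0, and let φ : U → E^⊥ (the orthogonal complement of E) be Lipschitz with constant ε. Let Γ = { x + φ(x) : x ∈ U } ⊂ ℝ^N. Then there is a constant C > 0, depending only on N, R and ε (and not on Γ, A or r), such that for every affine subspace A of ℝ^N with d := dim A ≤ N − 1 and every r > 0, the (N−1)-dimensional Hausdorff measure satisfies H^{N−1}( Γ ∩ { y ∈ ℝ^N : dist(y, A) < r } ) ≤ C · r^{N − d − 1}. -/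
/-!
Let `P` be the orthogonal projection onto `E` and `n = N - 1`. The graph map `G u = u + φ u` is
`(1 + ε)`-Lipschitz and `P ∘ G = id`, so the part of `Γ` in the `r`-tube around `A` is the
`G`-image of a set `S ⊆ U` lying within `r` of the affine subspace `P(A)` of `E`, whose dimension
`k` is at most `d`. In an orthonormal basis of `E` adapted to the direction of `P(A)`, `S` lies in a
box with `k` sides of length `2R` and `n - k` sides of length `2r`, so
`H^n(S) ≲ R^k r^(n-k) ≤ C r^(n-d)` when `r ≤ 1`; when `r ≥ 1`, the box `[-R, R]^n` suffices.
-/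

open MeasureTheory Metric Set NNReal Module
open scoped ENNReal RealInnerProductSpace

theorem LipschitzOnWith.hausdorffMeasure_image_le_ofReal {X Y : Type*} [EMetricSpace X]
    [EMetricSpace Y] [MeasurableSpace X] [BorelSpace X] [MeasurableSpace Y] [BorelSpace Y]
    {K : ℝ≥0} {f : X → Y} {s : Set X} (hf : LipschitzOnWith K f s) {n : ℕ} {c : ℝ}
    (hs : μH[n] s ≤ ENNReal.ofReal c) : μH[n] (f '' s) ≤ ENNReal.ofReal (K ^ n * c) := by
  calc μH[n] (f '' s) ≤ (K : ℝ≥0∞) ^ (n : ℝ) * μH[n] s := hf.hausdorffMeasure_image_le n.cast_nonneg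
    _ ≤ (K : ℝ≥0∞) ^ (n : ℝ) * ENNReal.ofReal c := by gcongr
    _ = ENNReal.ofReal (K ^ n * c) := by
      rw [ENNReal.ofReal_mul (by positivity), ENNReal.ofReal_pow K.coe_nonneg,
        ENNReal.ofReal_coe_nnreal, ENNReal.rpow_natCast]

theorem Submodule.dist_orthogonalProjectionOnto_le_dist_add {𝕜 V : Type*} [RCLike 𝕜]
    [NormedAddCommGroup V] [InnerProductSpace 𝕜 V] (K : Submodule 𝕜 V) [K.HasOrthogonalProjection]
    (u : K) {v : V} (hv : v ∈ Kᗮ) (a : V) :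
    dist u (K.orthogonalProjectionOnto a) ≤ dist ((u : V) + v) a := by
  have hu : K.orthogonalProjectionOnto ((u : V) + v) = u := by
    rw [map_add, K.orthogonalProjectionOnto_mem_subspace_eq_self,
      K.orthogonalProjectionOnto_apply_of_mem_orthogonal hv, add_zero]
  simpa [hu] using K.lipschitzWith_orthogonalProjectionOnto.dist_le_mul ((u : V) + v) a

section

variable {F : Type*} [NormedAddCommGroup F] [InnerProductSpace ℝ F]

theorem Submodule.exists_orthonormalBasis_sum_orthogonal [FiniteDimensional ℝ F]
    (W : Submodule ℝ F) :
    ∃ b : OrthonormalBasis (Fin (finrank ℝ W) ⊕ Fin (finrank ℝ Wᗮ)) ℝ F,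
      (∀ i, b (.inl i) ∈ W) ∧ ∀ j, b (.inr j) ∈ Wᗮ :=
  ⟨((stdOrthonormalBasis ℝ W).prod (stdOrthonormalBasis ℝ Wᗮ)).map
      W.orthogonalDecomposition.symm, by simp, by simp⟩

variable [MeasurableSpace F] [BorelSpace F]

theorem OrthonormalBasis.hausdorffMeasure_box_le {ι : Type*} [Fintype ι]
    (b : OrthonormalBasis ι ℝ F) (g bd : ι → ℝ) (hbd : ∀ i, 0 ≤ bd i) :
    μH[Fintype.card ι] {x | ∀ i, |⟪b i, x⟫ - g i| ≤ bd i}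
      ≤ ENNReal.ofReal (√(Fintype.card ι) ^ Fintype.card ι * ∏ i, 2 * bd i) := by
  -- the box is the image of a product of intervals in `ℓ^∞(ι)`, and `ℓ^∞(ι) → ℓ²(ι)` is
  -- `√(card ι)`-Lipschitz
  have hlip : LipschitzWith (NNReal.sqrt (Fintype.card ι)) (b.repr.symm ∘ WithLp.toLp 2) := by
    simpa [NNReal.sqrt_eq_rpow] using
      b.repr.symm.lipschitz.comp (PiLp.lipschitzWith_toLp 2 fun _ : ι => ℝ)
  have hbox : {x | ∀ i, |⟪b i, x⟫ - g i| ≤ bd i}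
      ⊆ (b.repr.symm ∘ WithLp.toLp 2) '' univ.pi fun i => Icc (g i - bd i) (g i + bd i) := by
    intro x hx
    refine ⟨fun i => ⟪b i, x⟫, fun i _ => ?_, by simp [← b.repr_apply_apply]⟩
    have := abs_le.mp (hx i)
    constructor <;> linarith
  calc _ ≤ _ := measure_mono hbox
    _ ≤ _ := hlip.hausdorffMeasure_image_le (by positivity) _
    _ = _ := by
      rw [hausdorffMeasure_pi_real, volume_pi_pi, ENNReal.ofReal_mul (by positivity),
        ENNReal.ofReal_prod_of_nonneg fun i _ => by linarith [hbd i], ENNReal.rpow_natCast,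
        ENNReal.ofReal_pow (by positivity), ← NNReal.coe_natCast, ← Real.coe_sqrt,
        ENNReal.ofReal_coe_nnreal]
      congr 1
      refine Finset.prod_congr rfl fun i _ => ?_
      rw [Real.volume_Icc]
      ring_nf

variable [FiniteDimensional ℝ F]

theorem hausdorffMeasure_le_box_of_near_affineSubspace (B : AffineSubspace ℝ F) {S : Set F}
    {R r : ℝ} (hSR : ∀ u ∈ S, ‖u‖ ≤ R) (hSB : ∀ u ∈ S, ∃ a ∈ B, dist u a ≤ r) :
    μH[finrank ℝ F] S ≤ ENNReal.ofReal (√(finrank ℝ F) ^ finrank ℝ F *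
      ((2 * R) ^ finrank ℝ B.direction * (2 * r) ^ finrank ℝ B.directionᗮ)) := by
  rcases S.eq_empty_or_nonempty with rfl | ⟨u₀, hu₀⟩
  · simp
  obtain ⟨c, hcB, hu₀c⟩ := hSB u₀ hu₀
  obtain ⟨b, -, hbB⟩ := B.direction.exists_orthonormalBasis_sum_orthogonal
  -- along `B.direction` the box is centred at `0` with half-side `R`, across it at `c` with `r`
  have hS : S ⊆ {x | ∀ i, |⟪b i, x⟫ - Sum.elim (fun _ => 0) (fun j => ⟪b (.inr j), c⟫) i|
      ≤ Sum.elim (fun _ => R) (fun _ => r) i} := by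
    intro u hu
    rintro (i | j)
    · calc |⟪b (.inl i), u⟫ - 0| = |⟪b (.inl i), u⟫| := by rw [sub_zero]
        _ ≤ ‖b (.inl i)‖ * ‖u‖ := abs_real_inner_le_norm _ _
        _ ≤ R := by rw [b.norm_eq_one, one_mul]; exact hSR u hu
    · obtain ⟨a, haB, hua⟩ := hSB u hu
      have hac : ⟪b (.inr j), a - c⟫ = 0 :=
        Submodule.inner_left_of_mem_orthogonal (B.vsub_mem_direction haB hcB) (hbB j)
      calc |⟪b (.inr j), u⟫ - ⟪b (.inr j), c⟫| = |⟪b (.inr j), u - a⟫| := by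
            rw [← inner_sub_right, ← sub_add_sub_cancel u a c, inner_add_right, hac, add_zero]
        _ ≤ ‖b (.inr j)‖ * ‖u - a‖ := abs_real_inner_le_norm _ _
        _ ≤ r := by simpa [b.norm_eq_one, ← dist_eq_norm] using hua
  have hcard : Fintype.card (Fin (finrank ℝ B.direction) ⊕ Fin (finrank ℝ B.directionᗮ))
      = finrank ℝ F :=
    (finrank_eq_card_basis b.toBasis).symm
  calc μH[finrank ℝ F] S ≤ _ := by rw [← hcard]; exact measure_mono hS
    _ ≤ _ := b.hausdorffMeasure_box_le _ _ (Sum.rec (fun _ => (norm_nonneg _).trans (hSR u₀ hu₀))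
        fun _ => dist_nonneg.trans hu₀c)
    _ = _ := by simp [hcard, Fintype.prod_sum_type]

theorem hausdorffMeasure_le_pow_of_near_affineSubspace (B : AffineSubspace ℝ F) {S : Set F}
    {R r : ℝ} {d : ℕ} (hR : 0 ≤ R) (hr : 0 ≤ r) (hBd : finrank ℝ B.direction ≤ d)
    (hSR : ∀ u ∈ S, ‖u‖ ≤ R) (hSB : ∀ u ∈ S, ∃ a ∈ B, dist u a ≤ r) :
    μH[finrank ℝ F] S
      ≤ ENNReal.ofReal ((√(finrank ℝ F) * (2 * R + 2)) ^ finrank ℝ F * r ^ (finrank ℝ F - d)) := by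
  rw [mul_pow, mul_assoc]
  rcases le_total r 1 with hr1 | hr1
  · refine (hausdorffMeasure_le_box_of_near_affineSubspace B hSR hSB).trans
      (ENNReal.ofReal_le_ofReal (mul_le_mul_of_nonneg_left ?_ (by positivity)))
    have hkm := B.direction.finrank_add_finrank_orthogonal
    set k := finrank ℝ B.direction
    set m := finrank ℝ B.directionᗮ
    calc (2 * R) ^ k * (2 * r) ^ m = (2 * R) ^ k * 2 ^ m * r ^ m := by ring
      _ ≤ (2 * R + 2) ^ k * (2 * R + 2) ^ m * r ^ m := by gcongr <;> linarith
      _ ≤ (2 * R + 2) ^ k * (2 * R + 2) ^ m * r ^ (k + m - d) :=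
          mul_le_mul_of_nonneg_left (pow_le_pow_of_le_one hr hr1 (by omega)) (by positivity)
      _ = _ := by rw [← pow_add, hkm]
  · have hball := hausdorffMeasure_le_box_of_near_affineSubspace ⊤ hSR
      fun u _ => ⟨u, AffineSubspace.mem_top _ _ u, (dist_self u).le⟩
    rw [AffineSubspace.direction_top, finrank_top, Submodule.top_orthogonal_eq_bot, finrank_bot,
      pow_zero, mul_one] at hball
    refine hball.trans (ENNReal.ofReal_le_ofReal (mul_le_mul_of_nonneg_left ?_ (by positivity)))
    set n := finrank ℝ F
    calc (2 * R) ^ n ≤ (2 * R + 2) ^ n * 1 := by rw [mul_one]; gcongr; linarith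
      _ ≤ (2 * R + 2) ^ n * r ^ (n - d) := by gcongr; exact one_le_pow₀ hr1

end

theorem patch_tube_measure_bound_general (N : ℕ) (hN : 2 ≤ N) (R : ℝ) (hR : 0 < R)
    (ε : ℝ≥0) :
    ∃ C : ℝ, 0 < C ∧
      ∀ (E : Submodule ℝ (EuclideanSpace ℝ (Fin N))),
        Module.finrank ℝ E = N - 1 →
        ∀ (U : Set E), IsOpen U → (∀ u ∈ U, ‖u‖ < R) →
        ∀ (φ : E → Eᗮ), LipschitzOnWith ε φ U →
        ∀ (A : AffineSubspace ℝ (EuclideanSpace ℝ (Fin N))),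
          (A : Set (EuclideanSpace ℝ (Fin N))).Nonempty →
          ∀ d : ℕ, Module.finrank ℝ A.direction = d → d ≤ N - 1 →
          ∀ r : ℝ, 0 < r →
            μH[(N : ℝ) - 1]
              ({x : EuclideanSpace ℝ (Fin N) |
                  ∃ u ∈ U, x = (u : EuclideanSpace ℝ (Fin N)) + (φ u : EuclideanSpace ℝ (Fin N))}
                ∩ {y | infDist y (A : Set (EuclideanSpace ℝ (Fin N))) < r})
              ≤ ENNReal.ofReal (C * r ^ ((N : ℝ) - d - 1)) := by
  obtain ⟨n, rfl⟩ : ∃ n, N = n + 1 := ⟨N - 1, by omega⟩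
  have hn : 0 < √(n : ℝ) := Real.sqrt_pos.2 (by exact_mod_cast (by omega : 0 < n))
  refine ⟨((1 + ε) * (√n * (2 * R + 2))) ^ n, by positivity, ?_⟩
  intro E hE U _ hUR φ hφ A hA d hAd hdn r hr
  simp only [Nat.add_sub_cancel] at hE hdn
  rw [show ((n + 1 : ℕ) : ℝ) - 1 = n by push_cast; ring,
    show ((n + 1 : ℕ) : ℝ) - d - 1 = (n - d : ℕ) by push_cast [hdn]; ring, Real.rpow_natCast]
  set G : E → EuclideanSpace ℝ (Fin (n + 1)) := fun u => u + φ u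
  set S := {u ∈ U | infDist (G u) A < r}
  set B := A.map (E.orthogonalProjectionOnto : _ →ₗ[ℝ] E).toAffineMap
  have hΓ : {x | ∃ u ∈ U, x = G u} ∩ {y | infDist y A < r} ⊆ G '' S := by
    rintro _ ⟨⟨u, hu, rfl⟩, hx⟩
    exact ⟨u, ⟨hu, hx⟩, rfl⟩
  have hSB : ∀ u ∈ S, ∃ b ∈ B, dist u b ≤ r := by
    rintro u ⟨-, hu⟩
    obtain ⟨a, ha, hua⟩ := (infDist_lt_iff hA).1 hu
    exact ⟨_, AffineSubspace.mem_map_of_mem _ ha,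
      (E.dist_orthogonalProjectionOnto_le_dist_add u (φ u).2 a).trans hua.le⟩
  have hBd : finrank ℝ B.direction ≤ d := by
    rw [AffineSubspace.map_direction, ← hAd]
    exact Submodule.finrank_map_le _ _
  have hS := hausdorffMeasure_le_pow_of_near_affineSubspace B hR.le hr.le hBd
    (fun u hu => (hUR u hu.1).le) hSB
  rw [hE] at hS
  have hG : LipschitzOnWith (1 + ε) G S := by
    simpa using (LipschitzWith.subtype_val _).lipschitzOnWith.add
      ((LipschitzWith.subtype_val _).comp_lipschitzOnWith (hφ.mono fun _ hu => hu.1))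
  calc μH[n] _ ≤ μH[n] (G '' S) := measure_mono hΓ
    _ ≤ _ := hG.hausdorffMeasure_image_le_ofReal hS
    _ = _ := by push_cast; rw [← mul_assoc, ← mul_pow]

/-- A single ε-Lipschitz patch `Γ` over an open subset `U` of a hyperplane
`E ⊂ ℝ^N`, with `U` contained in the ball of radius `R`, satisfies the tube estimate
`H^{N-1}(Γ ∩ B(A, r)) ≤ C r^{N - dim A - 1}` for every affine subspace `A` and `r > 0`,
with `C` depending only on `N`, `R`, `ε`. -/
theorem patch_tube_measure_bound (N : ℕ) (hN : 2 ≤ N) (R : ℝ) (hR : 0 < R)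
    (ε : ℝ≥0) (hε : 0 < ε) :
    ∃ C : ℝ, 0 < C ∧
      ∀ (E : Submodule ℝ (EuclideanSpace ℝ (Fin N))),
        Module.finrank ℝ E = N - 1 →
        ∀ (U : Set E), IsOpen U → (∀ u ∈ U, ‖u‖ < R) →
        ∀ (φ : E → Eᗮ), LipschitzOnWith ε φ U →
        ∀ (A : AffineSubspace ℝ (EuclideanSpace ℝ (Fin N))),
          (A : Set (EuclideanSpace ℝ (Fin N))).Nonempty →
          ∀ d : ℕ, Module.finrank ℝ A.direction = d → d ≤ N - 1 →
          ∀ r : ℝ, 0 < r →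
            μH[(N : ℝ) - 1]
              ({x : EuclideanSpace ℝ (Fin N) |
                  ∃ u ∈ U, x = (u : EuclideanSpace ℝ (Fin N)) + (φ u : EuclideanSpace ℝ (Fin N))}
                ∩ {y | infDist y (A : Set (EuclideanSpace ℝ (Fin N))) < r})
              ≤ ENNReal.ofReal (C * r ^ ((N : ℝ) - d - 1)) :=
  patch_tube_measure_bound_general N hN R hR ε
end

section
/- Let Ω ⊂ ℝ^n be a bounded open set, let E ⊂ Ω be a nonempty subset that is closed in Ω (so Ω \ E is open), and let m ≥ 0 be an integer. Suppose f : ℝ^n → ℂ is C^m on Ω \ E and g : ℝ^n → ℂ is C^m on Ω with all iterated derivatives of order ≤ m bounded on Ω. Assume there is C > 0 with |g(x)| ≤ C · dist(x, E) for all x ∈ Ω, and that for every k with 0 ≤ k ≤ m there are constants B_k > 0 and p(k) ≥ 0 such that the k-th iterated derivative of f satisfies ‖D^k f(x)‖ ≤ B_k · dist(x, E)^{−p(k)} for all x ∈ Ω \ E. Then there exists a natural number L such that the function h : Ω → ℂ defined by h = f · g^L on Ω \ E and h = 0 on E is C^m on Ω with all iterated derivatives of order ≤ m bounded on Ω. 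-/
/-!
Write `d = dist(·, E)` and say that `φ` has weight `s` on `Ω \ E` when its `j`-th derivative
is `O(d ^ (s - j))` for every `j ≤ m`. By the Leibniz rule weights add under products; `g` has
weight `1`, and since `d` is bounded `f` has some (very negative) weight `s`. Hence `f g^L` has
weight `s + L ≥ m + 2` for large `L`, so all its derivatives of order `≤ m` are `O(d²)`.
Extending such a function by `0` on `E` gives a `C^m` function: by induction on `k`, the `k`-th
derivative vanishes on `E` and is `O(|x - a|²)` near each `a ∈ E`, so it is differentiable there
with derivative `0`.
-/

open Metric Set Filter Asymptotics Topology

theorem le_abs_mul_rpow_sub_mul_rpow {y c d D a b : ℝ} (hd : 0 < d) (hdD : d ≤ D) (hba : b ≤ a)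
    (h : y ≤ c * d ^ a) : y ≤ |c| * D ^ (a - b) * d ^ b := by
  calc y ≤ |c| * d ^ a := h.trans (mul_le_mul_of_nonneg_right (le_abs_self c) (by positivity))
    _ = |c| * (d ^ (a - b) * d ^ b) := by rw [← Real.rpow_add hd, sub_add_cancel]
    _ ≤ |c| * (D ^ (a - b) * d ^ b) := by gcongr
    _ = |c| * D ^ (a - b) * d ^ b := by ring

theorem infDist_pos_of_mem_diff {X : Type*} [MetricSpace X] {U E : Set X} (hUE : IsOpen (U \ E))
    (hE : E.Nonempty) {x : X} (hx : x ∈ U \ E) : 0 < infDist x E :=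
  (infDist_pos_iff_notMem_closure hE).1 fun hxE =>
    disjoint_left.1 (disjoint_sdiff_left.closure_right hUE) hx hxE

section Weight

variable {𝕜 X F : Type*} [NontriviallyNormedField 𝕜] [NormedAddCommGroup X] [NormedSpace 𝕜 X]
  [NormedAddCommGroup F] [NormedSpace 𝕜 F] {m : ℕ} {S : Set X} {d : X → ℝ} {D s : ℝ}

variable (𝕜) in
def HasDerivWeight (m : ℕ) (S : Set X) (d : X → ℝ) (s : ℝ) (φ : X → F) : Prop :=
  ∀ j ≤ m, ∃ c, ∀ x ∈ S, ‖iteratedFDerivWithin 𝕜 j φ S x‖ ≤ c * d x ^ (s - j)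

theorem hasDerivWeight_const (a : F) : HasDerivWeight 𝕜 m S d 0 fun _ => a := by
  rintro (_ | j) _
  · exact ⟨‖a‖, fun x _ => by simp⟩
  · exact ⟨0, fun x _ => by simp [iteratedFDerivWithin_const_of_ne j.succ_ne_zero]⟩

theorem hasDerivWeight_one_of_norm_le {g : X → F} {C : ℝ} (hd : ∀ x ∈ S, 0 < d x)
    (hdD : ∀ x ∈ S, d x ≤ D) (hgE : ∀ x ∈ S, ‖g x‖ ≤ C * d x)
    (hgb : ∀ j ≤ m, ∃ B, ∀ x ∈ S, ‖iteratedFDerivWithin 𝕜 j g S x‖ ≤ B) :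
    HasDerivWeight 𝕜 m S d 1 g := by
  rintro (_ | j) hj
  · exact ⟨C, fun x hx => by simpa using hgE x hx⟩
  · obtain ⟨B, hB⟩ := hgb (j + 1) hj
    refine ⟨|B| * D ^ (0 - (1 - (j + 1 : ℕ) : ℝ)), fun x hx => ?_⟩
    refine le_abs_mul_rpow_sub_mul_rpow (hd x hx) (hdD x hx) (by simp) ?_
    simpa using hB x hx

theorem exists_hasDerivWeight {φ : X → F} (hd : ∀ x ∈ S, 0 < d x) (hdD : ∀ x ∈ S, d x ≤ D)
    (h : ∀ j ≤ m, ∃ B p : ℝ, ∀ x ∈ S, ‖iteratedFDerivWithin 𝕜 j φ S x‖ ≤ B * d x ^ (-p)) :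
    ∃ s, HasDerivWeight 𝕜 m S d s φ := by
  -- since `d` is bounded, lowering a weight only costs a constant, so one weight serves all `j`
  have hev : ∀ j ∈ Iic m, ∀ᶠ s : ℝ in atBot,
      ∃ c, ∀ x ∈ S, ‖iteratedFDerivWithin 𝕜 j φ S x‖ ≤ c * d x ^ (s - j) := by
    intro j hj
    obtain ⟨B, p, hB⟩ := h j hj
    filter_upwards [eventually_le_atBot (j - p)] with s hs
    exact ⟨_, fun x hx =>
      le_abs_mul_rpow_sub_mul_rpow (hd x hx) (hdD x hx) (by linarith) (hB x hx)⟩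
  exact ((eventually_all_finite (finite_Iic m)).2 hev).exists

theorem HasDerivWeight.exists_norm_le_rpow {φ : X → F} (h : HasDerivWeight 𝕜 m S d s φ)
    (hd : ∀ x ∈ S, 0 < d x) (hdD : ∀ x ∈ S, d x ≤ D) {t : ℝ} (ht : t ≤ s - m) :
    ∀ j ≤ m, ∃ c, ∀ x ∈ S, ‖iteratedFDerivWithin 𝕜 j φ S x‖ ≤ c * d x ^ t := by
  intro j hj
  obtain ⟨c, hc⟩ := h j hj
  have : (j : ℝ) ≤ m := by exact_mod_cast hj
  exact ⟨_, fun x hx =>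
    le_abs_mul_rpow_sub_mul_rpow (hd x hx) (hdD x hx) (by linarith) (hc x hx)⟩

variable {A : Type*} [NormedRing A] [NormedAlgebra 𝕜 A] {t : ℝ}

theorem HasDerivWeight.mul {φ ψ : X → A} (hφ : HasDerivWeight 𝕜 m S d s φ)
    (hψ : HasDerivWeight 𝕜 m S d t ψ) (hφc : ContDiffOn 𝕜 m φ S) (hψc : ContDiffOn 𝕜 m ψ S)
    (hS : UniqueDiffOn 𝕜 S) (hd : ∀ x ∈ S, 0 < d x) :
    HasDerivWeight 𝕜 m S d (s + t) fun x => φ x * ψ x := by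
  choose! cφ hcφ using hφ
  choose! cψ hcψ using hψ
  intro j hj
  refine ⟨∑ i ∈ Finset.range (j + 1), j.choose i * (cφ i * cψ (j - i)), fun x hx => ?_⟩
  refine (norm_iteratedFDerivWithin_mul_le hφc hψc hS hx (by exact_mod_cast hj)).trans ?_
  rw [Finset.sum_mul]
  refine Finset.sum_le_sum fun i hi => ?_
  have hij : i ≤ j := Nat.lt_succ_iff.mp (Finset.mem_range.mp hi)
  have hφi := hcφ i (hij.trans hj) x hx
  have hψi := hcψ (j - i) ((Nat.sub_le j i).trans hj) x hx
  have hexp : d x ^ (s - i) * d x ^ (t - (j - i : ℕ)) = d x ^ (s + t - j) := by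
    rw [← Real.rpow_add (hd x hx), Nat.cast_sub hij]
    ring_nf
  calc (j.choose i : ℝ) * ‖iteratedFDerivWithin 𝕜 i φ S x‖ *
        ‖iteratedFDerivWithin 𝕜 (j - i) ψ S x‖
      ≤ j.choose i * (cφ i * d x ^ (s - i)) * (cψ (j - i) * d x ^ (t - (j - i : ℕ))) :=
        mul_le_mul (by gcongr) hψi (norm_nonneg _)
          (mul_nonneg (Nat.cast_nonneg _) ((norm_nonneg _).trans hφi))
    _ = j.choose i * (cφ i * cψ (j - i)) * d x ^ (s + t - j) := by
        rw [← hexp]; ring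

theorem HasDerivWeight.pow {g : X → A} (hg : HasDerivWeight 𝕜 m S d t g)
    (hgc : ContDiffOn 𝕜 m g S) (hS : UniqueDiffOn 𝕜 S) (hd : ∀ x ∈ S, 0 < d x) (N : ℕ) :
    HasDerivWeight 𝕜 m S d (N * t) fun x => g x ^ N := by
  induction N with
  | zero => simpa using hasDerivWeight_const (𝕜 := 𝕜) (m := m) (S := S) (d := d) (1 : A)
  | succ N ih =>
    simp_rw [pow_succ']
    convert hg.mul ih hgc (hgc.pow N) hS hd using 1
    push_cast
    ring

end Weight

section FlatExtension

variable {𝕜 X F : Type*} [NontriviallyNormedField 𝕜] [NormedAddCommGroup X] [NormedSpace 𝕜 X]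
  [NormedAddCommGroup F] [NormedSpace 𝕜 F] {U E : Set X} {m : ℕ} {w : X → F}

theorem hasFDerivWithinAt_zero_of_norm_le_sq {φ : X → F} {s : Set X} {a : X} {c : ℝ}
    (ha : φ a = 0) (h : ∀ x ∈ s, ‖φ x‖ ≤ c * ‖x - a‖ ^ 2) :
    HasFDerivWithinAt φ (0 : X →L[𝕜] F) s a := by
  rw [hasFDerivWithinAt_iff_isLittleO]
  simp only [ha, sub_zero, zero_apply]
  refine IsBigO.trans_isLittleO (g := fun x => ‖x - a‖ ^ 2) ?_
    ((isLittleO_pow_sub_sub a one_lt_two).mono nhdsWithin_le_nhds)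
  exact IsBigO.of_bound c (eventually_nhdsWithin_of_forall fun x hx => by simpa using h x hx)

theorem iteratedFDerivWithin_diff_of_mem (hUE : IsOpen (U \ E)) {φ : X → F} {x : X}
    (hx : x ∈ U \ E) (k : ℕ) :
    iteratedFDerivWithin 𝕜 k φ (U \ E) x = iteratedFDerivWithin 𝕜 k φ U x :=
  iteratedFDerivWithin_congr_set (eventuallyEq_set.2 <| by
    filter_upwards [hUE.mem_nhds hx] with y hy using ⟨fun h => h.1, fun _ => hy⟩) k

theorem iteratedFDerivWithin_indicator_compl_of_mem (hUE : IsOpen (U \ E)) {x : X}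
    (hx : x ∈ U \ E) (k : ℕ) :
    iteratedFDerivWithin 𝕜 k (Eᶜ.indicator w) U x = iteratedFDerivWithin 𝕜 k w (U \ E) x := by
  rw [← iteratedFDerivWithin_diff_of_mem hUE hx]
  exact iteratedFDerivWithin_congr (fun y hy => indicator_of_mem hy.2 w) hx k

theorem norm_iteratedFDerivWithin_indicator_compl_le (hUE : IsOpen (U \ E)) {k : ℕ} {c : ℝ}
    (hw : ∀ x ∈ U \ E, ‖iteratedFDerivWithin 𝕜 k w (U \ E) x‖ ≤ c * infDist x E ^ 2)
    (hzero : ∀ a ∈ E, iteratedFDerivWithin 𝕜 k (Eᶜ.indicator w) U a = 0) {x : X} (hx : x ∈ U) :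
    ‖iteratedFDerivWithin 𝕜 k (Eᶜ.indicator w) U x‖ ≤ |c| * infDist x E ^ 2 := by
  by_cases hxE : x ∈ E
  · rw [hzero x hxE, norm_zero]
    positivity
  · rw [iteratedFDerivWithin_indicator_compl_of_mem hUE ⟨hx, hxE⟩]
    exact (hw x ⟨hx, hxE⟩).trans (by gcongr; exact le_abs_self c)

theorem hasFDerivWithinAt_iteratedFDerivWithin_indicator_compl (hUE : IsOpen (U \ E))
    {k : ℕ} {c : ℝ}
    (hw : ∀ x ∈ U \ E, ‖iteratedFDerivWithin 𝕜 k w (U \ E) x‖ ≤ c * infDist x E ^ 2)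
    (hzero : ∀ a ∈ E, iteratedFDerivWithin 𝕜 k (Eᶜ.indicator w) U a = 0) {a : X} (ha : a ∈ E) :
    HasFDerivWithinAt (iteratedFDerivWithin 𝕜 k (Eᶜ.indicator w) U)
      (0 : X →L[𝕜] X [×k]→L[𝕜] F) U a := by
  refine hasFDerivWithinAt_zero_of_norm_le_sq (c := |c|) (hzero a ha) fun x hx => ?_
  refine (norm_iteratedFDerivWithin_indicator_compl_le hUE hw hzero hx).trans ?_
  rw [← dist_eq_norm]
  gcongr
  exacts [infDist_nonneg, infDist_le_dist_of_mem ha]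

theorem iteratedFDerivWithin_indicator_compl_eq_zero (hU : UniqueDiffOn 𝕜 U) (hEU : E ⊆ U)
    (hUE : IsOpen (U \ E))
    (hw : ∀ k ≤ m, ∃ c, ∀ x ∈ U \ E, ‖iteratedFDerivWithin 𝕜 k w (U \ E) x‖ ≤ c * infDist x E ^ 2)
    {k : ℕ} (hk : k ≤ m) {a : X} (ha : a ∈ E) :
    iteratedFDerivWithin 𝕜 k (Eᶜ.indicator w) U a = 0 := by
  induction k generalizing a with
  | zero =>
    ext
    simp [ha]
  | succ k ih =>
    obtain ⟨c, hc⟩ := hw k (by omega)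
    have hderiv := hasFDerivWithinAt_iteratedFDerivWithin_indicator_compl hUE hc
      (fun b hb => ih (by omega) hb) ha
    rw [iteratedFDerivWithin_succ_eq_comp_left, Function.comp_apply,
      hderiv.fderivWithin (hU a (hEU ha)), LinearIsometryEquiv.map_zero]

theorem contDiffOn_indicator_compl_of_sq_bound (hU : UniqueDiffOn 𝕜 U) (hEU : E ⊆ U)
    (hUE : IsOpen (U \ E)) (hwc : ContDiffOn 𝕜 m w (U \ E))
    (hw : ∀ k ≤ m, ∃ c, ∀ x ∈ U \ E, ‖iteratedFDerivWithin 𝕜 k w (U \ E) x‖ ≤ c * infDist x E ^ 2) :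
    ContDiffOn 𝕜 m (Eᶜ.indicator w) U := by
  have hderiv : ∀ k ≤ m, ∀ a ∈ E,
      HasFDerivWithinAt (iteratedFDerivWithin 𝕜 k (Eᶜ.indicator w) U)
      (0 : X →L[𝕜] X [×k]→L[𝕜] F) U a := fun k hk a ha =>
    hasFDerivWithinAt_iteratedFDerivWithin_indicator_compl hUE (hw k hk).choose_spec
      (fun _ hb => iteratedFDerivWithin_indicator_compl_eq_zero hU hEU hUE hw hk hb) ha
  have hloc : ∀ k, ∀ x ∈ U \ E, iteratedFDerivWithin 𝕜 k (Eᶜ.indicator w) U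
      =ᶠ[𝓝 x] iteratedFDerivWithin 𝕜 k w (U \ E) := fun k x hx => by
    filter_upwards [hUE.mem_nhds hx] with y hy
      using iteratedFDerivWithin_indicator_compl_of_mem hUE hy k
  refine contDiffOn_of_continuousOn_differentiableOn (fun k hk x hx => ?_) (fun k hk x hx => ?_)
  all_goals by_cases hxE : x ∈ E
  · exact (hderiv k (by exact_mod_cast hk) x hxE).continuousWithinAt
  · exact (((hwc.continuousOn_iteratedFDerivWithin (by exact_mod_cast hk)
      hUE.uniqueDiffOn).continuousAt (hUE.mem_nhds ⟨hx, hxE⟩)).congr_of_eventuallyEq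
      (hloc k x ⟨hx, hxE⟩)).continuousWithinAt
  · exact (hderiv k (by exact_mod_cast hk.le) x hxE).differentiableWithinAt
  · exact (((hwc.differentiableOn_iteratedFDerivWithin (by exact_mod_cast hk)
      hUE.uniqueDiffOn) x ⟨hx, hxE⟩).differentiableAt (hUE.mem_nhds ⟨hx, hxE⟩)
      ).congr_of_eventuallyEq (hloc k x ⟨hx, hxE⟩) |>.differentiableWithinAt

theorem exists_norm_iteratedFDerivWithin_indicator_compl_le (hU : UniqueDiffOn 𝕜 U)
    (hEU : E ⊆ U) (hUE : IsOpen (U \ E))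
    (hw : ∀ k ≤ m, ∃ c, ∀ x ∈ U \ E, ‖iteratedFDerivWithin 𝕜 k w (U \ E) x‖ ≤ c * infDist x E ^ 2)
    {D : ℝ} (hdD : ∀ x ∈ U, infDist x E ≤ D) {k : ℕ} (hk : k ≤ m) :
    ∃ B, ∀ x ∈ U, ‖iteratedFDerivWithin 𝕜 k (Eᶜ.indicator w) U x‖ ≤ B := by
  obtain ⟨c, hc⟩ := hw k hk
  refine ⟨|c| * D ^ 2, fun x hx => ?_⟩
  refine (norm_iteratedFDerivWithin_indicator_compl_le hUE hc (fun a ha =>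
    iteratedFDerivWithin_indicator_compl_eq_zero hU hEU hUE hw hk ha) hx).trans ?_
  gcongr
  exacts [infDist_nonneg, hdD x hx]

end FlatExtension

theorem vanishing_power_smooth_extension_general (n m : ℕ)
    (Ω E : Set (EuclideanSpace ℝ (Fin n)))
    (hΩo : IsOpen Ω) (hΩb : Bornology.IsBounded Ω)
    (hEne : E.Nonempty) (hEΩ : E ⊆ Ω) (hEcl : IsOpen (Ω \ E))
    (f g : EuclideanSpace ℝ (Fin n) → ℂ)
    (hf : ContDiffOn ℝ m f (Ω \ E))
    (hg : ContDiffOn ℝ m g Ω)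
    (hgb : ∀ k ≤ m, ∃ B : ℝ, ∀ x ∈ Ω, ‖iteratedFDerivWithin ℝ k g Ω x‖ ≤ B)
    (C : ℝ) (hgE : ∀ x ∈ Ω, ‖g x‖ ≤ C * infDist x E)
    (hfd : ∀ k ≤ m, ∃ B : ℝ, 0 < B ∧ ∃ p : ℝ, 0 ≤ p ∧
      ∀ x ∈ Ω \ E, ‖iteratedFDerivWithin ℝ k f (Ω \ E) x‖ ≤ B * infDist x E ^ (-p)) :
    ∃ (L : ℕ) (h : EuclideanSpace ℝ (Fin n) → ℂ),
      (∀ x ∈ Ω \ E, h x = f x * g x ^ L) ∧ (∀ x ∈ E, h x = 0) ∧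
      ContDiffOn ℝ m h Ω ∧
      ∀ k ≤ m, ∃ B : ℝ, ∀ x ∈ Ω, ‖iteratedFDerivWithin ℝ k h Ω x‖ ≤ B := by
  have hd : ∀ x ∈ Ω \ E, 0 < infDist x E := fun x hx => infDist_pos_of_mem_diff hEcl hEne hx
  obtain ⟨e, he⟩ := hEne
  have hdD : ∀ x ∈ Ω, infDist x E ≤ diam Ω := fun x hx =>
    (infDist_le_dist_of_mem he).trans (dist_le_diam_of_mem hΩb hx (hEΩ he))
  have hdD' : ∀ x ∈ Ω \ E, infDist x E ≤ diam Ω := fun x hx => hdD x hx.1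
  have hS : UniqueDiffOn ℝ (Ω \ E) := hEcl.uniqueDiffOn
  have hgc : ContDiffOn ℝ m g (Ω \ E) := hg.mono sdiff_subset
  obtain ⟨s, hfs⟩ := exists_hasDerivWeight hd hdD' fun k hk =>
    let ⟨B, _, p, _, hB⟩ := hfd k hk; ⟨B, p, hB⟩
  have hg1 : HasDerivWeight ℝ m (Ω \ E) (infDist · E) 1 g :=
    hasDerivWeight_one_of_norm_le hd hdD' (fun x hx => hgE x hx.1) fun k hk =>
      let ⟨B, hB⟩ := hgb k hk
      ⟨B, fun x hx => by rw [iteratedFDerivWithin_diff_of_mem hEcl hx]; exact hB x hx.1⟩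
  set L := ⌈m + 2 - s⌉₊
  have hflat : ∀ k ≤ m, ∃ c, ∀ x ∈ Ω \ E,
      ‖iteratedFDerivWithin ℝ k (fun x => f x * g x ^ L) (Ω \ E) x‖ ≤ c * infDist x E ^ 2 := by
    have hL : (2 : ℝ) ≤ s + L * 1 - m := by linarith [Nat.le_ceil ((m : ℝ) + 2 - s)]
    simpa only [Real.rpow_two] using
      (hfs.mul (hg1.pow hgc hS hd L) hf (hgc.pow L) hS hd).exists_norm_le_rpow hd hdD' hL
  exact ⟨L, Eᶜ.indicator fun x => f x * g x ^ L, fun x hx => indicator_of_mem hx.2 _,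
    fun x hx => indicator_of_notMem (not_not.2 hx) _,
    contDiffOn_indicator_compl_of_sq_bound hΩo.uniqueDiffOn hEΩ hEcl (hf.mul (hgc.pow L)) hflat,
    fun k hk => exists_norm_iteratedFDerivWithin_indicator_compl_le hΩo.uniqueDiffOn hEΩ hEcl
      hflat hdD hk⟩

/-- If `f` is `C^m` on `Ω \ E` with derivatives blowing up at a finite
negative power of `dist(·, E)`, and `g` is `C^m` on `Ω` with bounded derivatives and
`|g| ≤ C dist(·, E)`, then for some `L` the function equal to `f g^L` off `E` and `0` on `E`
is `C^m` on `Ω` with bounded derivatives. -/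
theorem vanishing_power_smooth_extension (n m : ℕ)
    (Ω E : Set (EuclideanSpace ℝ (Fin n)))
    (hΩo : IsOpen Ω) (hΩb : Bornology.IsBounded Ω)
    (hEne : E.Nonempty) (hEΩ : E ⊆ Ω) (hEcl : IsOpen (Ω \ E))
    (f g : EuclideanSpace ℝ (Fin n) → ℂ)
    (hf : ContDiffOn ℝ m f (Ω \ E))
    (hg : ContDiffOn ℝ m g Ω)
    (hgb : ∀ k ≤ m, ∃ B : ℝ, ∀ x ∈ Ω, ‖iteratedFDerivWithin ℝ k g Ω x‖ ≤ B)
    (C : ℝ) (hC : 0 < C) (hgE : ∀ x ∈ Ω, ‖g x‖ ≤ C * infDist x E)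
    (hfd : ∀ k ≤ m, ∃ B : ℝ, 0 < B ∧ ∃ p : ℝ, 0 ≤ p ∧
      ∀ x ∈ Ω \ E, ‖iteratedFDerivWithin ℝ k f (Ω \ E) x‖ ≤ B * infDist x E ^ (-p)) :
    ∃ (L : ℕ) (h : EuclideanSpace ℝ (Fin n) → ℂ),
      (∀ x ∈ Ω \ E, h x = f x * g x ^ L) ∧ (∀ x ∈ E, h x = 0) ∧
      ContDiffOn ℝ m h Ω ∧
      ∀ k ≤ m, ∃ B : ℝ, ∀ x ∈ Ω, ‖iteratedFDerivWithin ℝ k h Ω x‖ ≤ B :=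
  vanishing_power_smooth_extension_general n m Ω E hΩo hΩb hEne hEΩ hEcl f g hf hg hgb C hgE hfd
end

section
/- For every pair of integers n ≥ 1 and m ≥ 0 there is a constant C_m > 0 with the following property: if U ⊂ ℝ^n is open, g : U → ℂ is C^m on U and g is nonvanishing on U, then for every x ∈ U the m-th iterated derivative of the function 1/g satisfies ‖D^m (1/g)(x)‖ ≤ C_m · ( Σ_{k=0}^{m} ‖D^k g(x)‖ )^m / |g(x)|^{m+1}. -/
/-!
The map `w ↦ w⁻¹` has `‖D^i (·⁻¹)(w)‖ = i! / ‖w‖^(i+1)`, so the Faà di Bruno bound for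
`(·⁻¹) ∘ g` gives `‖D^m (1/g)(x)‖ ≤ (m!)² / ‖g x‖^(m+1)` as soon as all the derivatives of `g`
at `x` have norm at most `1`. Since `1/g` is homogeneous of degree `-1` in `g`, replacing `g` by
`g / S`, where `S` bounds the norms of the derivatives of `g` at `x`, gives the general bound.
-/

open Nat

section

variable {𝕜 : Type*} [RCLike 𝕜]

theorem norm_iteratedFDeriv_real_inv {z : 𝕜} (hz : z ≠ 0) (i : ℕ) :
    ‖iteratedFDeriv ℝ i Inv.inv z‖ = i ! / ‖z‖ ^ (i + 1) := by
  rw [← (contDiffAt_inv 𝕜 (n := i) hz).restrictScalars_iteratedFDeriv (𝕜 := ℝ),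
    Function.comp_apply, ContinuousMultilinearMap.norm_restrictScalars,
    norm_iteratedFDeriv_eq_norm_iteratedDeriv, iteratedDeriv_eq_iterate, iter_deriv_inv,
    norm_mul, norm_mul, norm_pow, norm_neg, norm_one, one_pow, one_mul, RCLike.norm_natCast,
    norm_zpow, show (-1 - i : ℤ) = -((i + 1 : ℕ) : ℤ) by push_cast; ring, zpow_neg,
    zpow_natCast, div_eq_mul_inv]

variable {E : Type*} [NormedAddCommGroup E] [NormedSpace ℝ E] {s : Set E} {g : E → 𝕜} {x : E}
  {m : ℕ}

theorem norm_iteratedFDerivWithin_inv_le_of_le_one (hs : UniqueDiffOn ℝ s)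
    (hg : ContDiffOn ℝ m g s) (hg₀ : ∀ y ∈ s, g y ≠ 0) (hx : x ∈ s) (hgx : ‖g x‖ ≤ 1)
    (hD : ∀ k, 1 ≤ k → k ≤ m → ‖iteratedFDerivWithin ℝ k g s x‖ ≤ 1) :
    ‖iteratedFDerivWithin ℝ m (fun y ↦ (g y)⁻¹) s x‖ ≤ (m ! : ℝ) ^ 2 / ‖g x‖ ^ (m + 1) := by
  have hgx₀ : 0 < ‖g x‖ := norm_pos_iff.2 (hg₀ x hx)
  have hC : ∀ i ≤ m, ‖iteratedFDerivWithin ℝ i Inv.inv {0}ᶜ (g x)‖ ≤ m ! / ‖g x‖ ^ (m + 1) := by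
    intro i hi
    rw [iteratedFDerivWithin_of_isOpen i isOpen_compl_singleton (hg₀ x hx),
      norm_iteratedFDeriv_real_inv (hg₀ x hx)]
    exact div_le_div₀ (by positivity) (mod_cast Nat.factorial_le hi) (by positivity)
      (pow_le_pow_of_le_one hgx₀.le hgx (by omega))
  have hFaaDiBruno := norm_iteratedFDerivWithin_comp_le (contDiffOn_inv ℝ) hg le_rfl
    isOpen_compl_singleton.uniqueDiffOn hs hg₀ hx hC (D := 1) (by simpa using hD)
  rwa [one_pow, mul_one, ← mul_div_assoc, ← sq] at hFaaDiBruno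

theorem norm_iteratedFDerivWithin_inv_le (hs : UniqueDiffOn ℝ s)
    (hg : ContDiffOn ℝ m g s) (hg₀ : ∀ y ∈ s, g y ≠ 0) (hx : x ∈ s) {S : ℝ}
    (hS : ∀ k ≤ m, ‖iteratedFDerivWithin ℝ k g s x‖ ≤ S) :
    ‖iteratedFDerivWithin ℝ m (fun y ↦ (g y)⁻¹) s x‖ ≤
      (m ! : ℝ) ^ 2 * S ^ m / ‖g x‖ ^ (m + 1) := by
  have hgx₀ : 0 < ‖g x‖ := norm_pos_iff.2 (hg₀ x hx)
  have hS₀ : 0 < S := hgx₀.trans_le (by simpa using hS 0 m.zero_le)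
  have hg' : ContDiffOn ℝ m (S⁻¹ • g) s := hg.const_smul S⁻¹
  have hg'₀ : ∀ y ∈ s, (S⁻¹ • g) y ≠ 0 := fun y hy ↦ smul_ne_zero (inv_ne_zero hS₀.ne') (hg₀ y hy)
  have hnorm (k : ℕ) (hk : k ≤ m) : ‖iteratedFDerivWithin ℝ k (S⁻¹ • g) s x‖ ≤ 1 := by
    rw [iteratedFDerivWithin_const_smul_apply ((hg.of_le (mod_cast hk)) x hx) hs hx, norm_smul,
      norm_inv, Real.norm_of_nonneg hS₀.le]
    exact inv_mul_le_one_of_le₀ (hS k hk) hS₀.le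
  have hbound := norm_iteratedFDerivWithin_inv_le_of_le_one hs hg' hg'₀ hx
    (by simpa using hnorm 0 m.zero_le) (fun k _ hk ↦ hnorm k hk)
  rw [Pi.smul_apply, norm_smul, norm_inv, Real.norm_of_nonneg hS₀.le] at hbound
  have hinv : (fun y ↦ (g y)⁻¹) = S⁻¹ • fun y ↦ ((S⁻¹ • g) y)⁻¹ := by
    funext y
    rw [Pi.smul_apply, Pi.smul_apply, smul_inv₀, smul_smul, inv_inv, inv_mul_cancel₀ hS₀.ne',
      one_smul]
  rw [hinv, iteratedFDerivWithin_const_smul_apply (f := fun y ↦ ((S⁻¹ • g) y)⁻¹)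
    ((hg'.inv hg'₀) x hx) hs hx, norm_smul, norm_inv, Real.norm_of_nonneg hS₀.le]
  calc S⁻¹ * ‖iteratedFDerivWithin ℝ m (fun y ↦ ((S⁻¹ • g) y)⁻¹) s x‖
      ≤ S⁻¹ * ((m ! : ℝ) ^ 2 / (S⁻¹ * ‖g x‖) ^ (m + 1)) := by gcongr
    _ = (m ! : ℝ) ^ 2 * S ^ m / ‖g x‖ ^ (m + 1) := by
      rw [mul_pow, inv_pow, pow_succ S]; field_simp

end

theorem iteratedFDeriv_inv_bound_general (n m : ℕ) :
    ∃ C : ℝ, 0 < C ∧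
      ∀ (U : Set (EuclideanSpace ℝ (Fin n))) (g : EuclideanSpace ℝ (Fin n) → ℂ),
        IsOpen U → ContDiffOn ℝ m g U → (∀ x ∈ U, g x ≠ 0) →
        ∀ x ∈ U,
          ‖iteratedFDerivWithin ℝ m (fun y => (g y)⁻¹) U x‖ ≤
            C * (∑ k ∈ Finset.range (m + 1), ‖iteratedFDerivWithin ℝ k g U x‖) ^ m
              / ‖g x‖ ^ (m + 1) := by
  refine ⟨(m ! : ℝ) ^ 2, by positivity, fun U g hU hg hg₀ x hx ↦ ?_⟩
  refine norm_iteratedFDerivWithin_inv_le hU.uniqueDiffOn hg hg₀ hx fun k hk ↦ ?_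
  exact Finset.single_le_sum (f := fun k ↦ ‖iteratedFDerivWithin ℝ k g U x‖)
    (fun _ _ ↦ norm_nonneg _) (Finset.mem_range_succ_iff.2 hk)

/-- Uniform bound for iterated derivatives of a reciprocal:
`‖D^m (1/g)(x)‖ ≤ C_m (Σ_{k≤m} ‖D^k g(x)‖)^m / |g(x)|^{m+1}`, with `C_m` depending
only on `n` and `m`. -/
theorem iteratedFDeriv_inv_bound (n m : ℕ) (hn : 1 ≤ n) :
    ∃ C : ℝ, 0 < C ∧
      ∀ (U : Set (EuclideanSpace ℝ (Fin n))) (g : EuclideanSpace ℝ (Fin n) → ℂ),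
        IsOpen U → ContDiffOn ℝ m g U → (∀ x ∈ U, g x ≠ 0) →
        ∀ x ∈ U,
          ‖iteratedFDerivWithin ℝ m (fun y => (g y)⁻¹) U x‖ ≤
            C * (∑ k ∈ Finset.range (m + 1), ‖iteratedFDerivWithin ℝ k g U x‖) ^ m
              / ‖g x‖ ^ (m + 1) :=
  iteratedFDeriv_inv_bound_general n m
end

section
/- Let G : ℝ × ℂ → ℂ be such that (t, z) ↦ G(t, z) is continuous on [0, 1] × (closed unit disc), and for each t ∈ [0, 1] the function z ↦ G(t, z) is holomorphic on the open unit disc. Suppose G(0, 0) = 0 and G(0, z) ≠ 0 for every z with |z| = 1. Then there exists ε > 0 such that for every t ∈ [0, ε) there is a point z with |z| < 1 and G(t, z) = 0. -/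
open Metric Set

/-- Hurwitz-type continuity of zeros: if `G(t, ·)` is a continuous family
(on `[0,1] ×` closed unit disc) of functions holomorphic in the open unit disc, `G(0,0) = 0`
and `G(0, ·)` is zero-free on the unit circle, then for all small `t ≥ 0` the function
`G(t, ·)` has a zero in the open unit disc. -/
theorem zeros_persist_in_family (G : ℝ × ℂ → ℂ)
    (hGc : ContinuousOn G (Set.Icc (0 : ℝ) 1 ×ˢ Metric.closedBall (0 : ℂ) 1))
    (hGh : ∀ t ∈ Set.Icc (0 : ℝ) 1,
      DifferentiableOn ℂ (fun z => G (t, z)) (Metric.ball (0 : ℂ) 1))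
    (h00 : G (0, 0) = 0)
    (hb : ∀ z : ℂ, ‖z‖ = 1 → G (0, z) ≠ 0) :
    ∃ ε > 0, ∀ t ∈ Set.Ico (0 : ℝ) ε, ∃ z : ℂ, ‖z‖ < 1 ∧ G (t, z) = 0 := by
  -- the compact parameter set
  set K : Set (ℝ × ℂ) := Set.Icc (0 : ℝ) 1 ×ˢ Metric.closedBall (0 : ℂ) 1 with hK
  have hKc : IsCompact K := (isCompact_Icc).prod (isCompact_closedBall _ _)
  -- minimum of ‖G(0,·)‖ on the unit sphere
  have hsc : IsCompact (Metric.sphere (0 : ℂ) 1) := isCompact_sphere _ _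
  have hsne : (Metric.sphere (0 : ℂ) 1).Nonempty := ⟨1, by simp⟩
  have hmem0 : ∀ z ∈ Metric.sphere (0 : ℂ) 1, ((0 : ℝ), z) ∈ K := by
    intro z hz
    refine ⟨by constructor <;> norm_num, ?_⟩
    exact Metric.sphere_subset_closedBall hz
  have hcont0 : ContinuousOn (fun z : ℂ => ‖G (0, z)‖) (Metric.sphere (0 : ℂ) 1) := by
    apply ContinuousOn.norm
    exact hGc.comp (continuous_const.prodMk continuous_id).continuousOn hmem0
  obtain ⟨w₀, hw₀s, hw₀min⟩ := hsc.exists_isMinOn hsne hcont0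
  set m : ℝ := ‖G (0, w₀)‖ with hm
  have hw₀norm : ‖w₀‖ = 1 := by simpa using hw₀s
  have hmpos : 0 < m := norm_pos_iff.mpr (hb w₀ hw₀norm)
  -- uniform continuity on K
  have hUC : UniformContinuousOn G K := hKc.uniformContinuousOn_of_continuous hGc
  rw [Metric.uniformContinuousOn_iff] at hUC
  obtain ⟨δ, hδpos, hδ⟩ := hUC (m / 2) (by positivity)
  refine ⟨min δ 1, by positivity, ?_⟩
  rintro t ⟨ht0, htδ⟩
  have ht1 : t < 1 := lt_of_lt_of_le htδ (min_le_right _ _)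
  have htδ' : t < δ := lt_of_lt_of_le htδ (min_le_left _ _)
  have htI : t ∈ Set.Icc (0 : ℝ) 1 := ⟨ht0, ht1.le⟩
  -- closeness estimates
  have hclose : ∀ w : ℂ, w ∈ Metric.closedBall (0 : ℂ) 1 →
      dist (G (t, w)) (G (0, w)) < m / 2 := by
    intro w hw
    apply hδ (t, w) ⟨htI, hw⟩ (0, w) ⟨by constructor <;> norm_num, hw⟩
    rw [Prod.dist_eq]
    simp only [dist_self, Real.dist_eq, sub_zero, abs_of_nonneg ht0]
    exact max_lt htδ' hδpos
  have h0ball : (0 : ℂ) ∈ Metric.closedBall (0 : ℂ) 1 := by simp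
  have hcenter : ‖G (t, 0)‖ < m / 2 := by
    have := hclose 0 h0ball
    rwa [dist_eq_norm, h00, sub_zero] at this
  have hbound : ∀ w : ℂ, ‖w‖ = 1 → m / 2 < ‖G (t, w)‖ := by
    intro w hw
    have hwcb : w ∈ Metric.closedBall (0 : ℂ) 1 := by
      simp [Metric.mem_closedBall, dist_zero_right, hw]
    have h1 : dist (G (t, w)) (G (0, w)) < m / 2 := hclose w hwcb
    have h2 : m ≤ ‖G (0, w)‖ := hw₀min (by simp [Metric.mem_sphere, dist_zero_right, hw])
    have h3 : ‖G (0, w)‖ - ‖G (t, w)‖ ≤ dist (G (t, w)) (G (0, w)) := by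
      rw [dist_comm, dist_eq_norm]
      exact (norm_sub_norm_le _ _)
    linarith
  -- minimum modulus argument
  by_contra hcon
  push_neg at hcon
  have hnz : ∀ w ∈ Metric.closedBall (0 : ℂ) 1, G (t, w) ≠ 0 := by
    intro w hw
    rcases lt_or_eq_of_le (by simpa [Metric.mem_closedBall, dist_zero_right] using hw :
        ‖w‖ ≤ 1) with h | h
    · intro h0
      exact (hcon w h) h0
    · intro h0
      have := hbound w h
      rw [h0] at this
      simp at this
      linarith
  -- 1/G(t,·) is diff on ball, cont on closed ball
  have hGtc : ContinuousOn (fun z : ℂ => G (t, z)) (Metric.closedBall (0 : ℂ) 1) :=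
    hGc.comp (continuous_const.prodMk continuous_id).continuousOn
      (fun z hz => ⟨htI, hz⟩)
  have hdiff : DiffContOnCl ℂ (fun z : ℂ => (G (t, z))⁻¹) (Metric.ball (0 : ℂ) 1) := by
    constructor
    · exact (hGh t htI).inv (fun z hz => hnz z (Metric.ball_subset_closedBall hz))
    · rw [closure_ball (0 : ℂ) one_ne_zero]
      exact hGtc.inv₀ hnz
  have hfr : ∀ z ∈ frontier (Metric.ball (0 : ℂ) 1),
      ‖(G (t, z))⁻¹‖ ≤ (m / 2)⁻¹ := by
    intro z hz
    rw [frontier_ball (0 : ℂ) one_ne_zero] at hz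
    have hz1 : ‖z‖ = 1 := by simpa [Metric.mem_sphere, dist_zero_right] using hz
    rw [norm_inv]
    exact inv_anti₀ (by positivity) (hbound z hz1).le
  have h0cl : (0 : ℂ) ∈ closure (Metric.ball (0 : ℂ) 1) := by
    rw [closure_ball (0 : ℂ) one_ne_zero]; exact h0ball
  have hmax := Complex.norm_le_of_forall_mem_frontier_norm_le
    Metric.isBounded_ball hdiff hfr h0cl
  rw [norm_inv] at hmax
  have hne : G (t, 0) ≠ 0 := hnz 0 h0ball
  have hpos : 0 < ‖G (t, 0)‖ := norm_pos_iff.mpr hne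
  have : (m / 2)⁻¹ < ‖G (t, 0)‖⁻¹ := by
    exact (inv_strictAnti₀ hpos hcenter : _)
  linarith
end

section
/- Let n ≥ 2 and write a point of ℂ^n as w = (w₁, w₂, w̃) with w₁, w₂ ∈ ℂ and w̃ ∈ ℂ^{n−2}. Let ρ₁(w) = Re(w₁w₂) + |w₁|². Suppose ρ₁(w) < 0, and set α = (w₁ − conj(w₂))/2, Σ_w = { ζ ∈ ℂ : |ζ − α|² ≤ |α|² − |w₁|² }, and φ_w(ζ) = ( ζ, |w₁|²/ζ − 2·conj(α), w̃ ). Then: (a) w₁ ≠ 0 and |w₁ − α|² < |α|² − |w₁|², so Σ_w is a closed disc of positive radius containing w₁ in its interior; (b) 0 ∉ Σ_w, so φ_w is well defined and holomorphic on a neighbourhood of Σ_w; (c) φ_w(w₁) = w; (d) for every ζ ∈ Σ_w one has ρ₁(φ_w(ζ)) = |ζ − α|² − (|α|² − |w₁|²); in particular ρ₁(φ_w(ζ)) ≤ 0 on Σ_w and ρ₁(φ_w(ζ)) = 0 exactly on the boundary circle |ζ − α|² = |α|² − |w₁|²; (e) for every ζ on that boundary circle, ‖φ_w(ζ)‖ ≤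 3‖w‖, where ‖·‖ is the Euclidean norm on ℂ^n. -/
open Complex

noncomputable section

/-- `ρ₁(w) = Re(w₁ w₂) + |w₁|²` on `ℂ^n` (with `n = m + 2 ≥ 2`). -/
def rho1 (m : ℕ) (w : EuclideanSpace ℂ (Fin (m + 2))) : ℝ :=
  (w 0 * w 1).re + ‖w 0‖ ^ 2

/-!
Multiplying the second coordinate of `φ_w(ζ) = (ζ, |w₁|²/ζ - 2ᾱ, w̃)` by the first gives
`|w₁|² - 2ᾱζ`, so `ρ₁ ∘ φ_w = |ζ|² - 2 Re(ᾱζ) + |w₁|² = |ζ - α|² - (|α|² - |w₁|²)` away from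
`ζ = 0`. Since `φ_w(w₁) = w`, evaluating at `w₁` turns `ρ₁(w) < 0` into the interior condition.
The boundary circle `|ζ - α|² = |α|² - |w₁|²` is orthogonal to `|ζ| = |w₁|`, hence invariant
under the inversion `ζ ↦ |w₁|²/ζ̄`, and the second coordinate of `φ_w` is the conjugate of that
inversion minus `2α`. So on the boundary both moving coordinates have modulus at most
`|α| + radius ≤ 2|α|`, and `2|α|² ≤ |w₁|² + |w₂|²` gives `‖φ_w(ζ)‖ ≤ 2‖w‖`.
-/

open ComplexConjugate

namespace Complex

theorem ofReal_sq_norm_div_self (a : ℂ) : ((‖a‖ ^ 2 : ℝ) : ℂ) / a = conj a := by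
  rcases eq_or_ne a 0 with rfl | ha
  · simp
  · rw [div_eq_iff ha, conj_mul', ofReal_pow]

theorem re_mul_div_sub_add_sq_norm (s : ℝ) (α : ℂ) {ζ : ℂ} (hζ : ζ ≠ 0) :
    (ζ * (s / ζ - 2 * conj α)).re + ‖ζ‖ ^ 2 = ‖ζ - α‖ ^ 2 - (‖α‖ ^ 2 - s) := by
  rw [mul_sub, mul_div_cancel₀ _ hζ, Complex.sq_norm, Complex.sq_norm, Complex.sq_norm,
    normSq_sub]
  simp only [sub_re, ofReal_re, mul_re, mul_im, conj_re, conj_im, re_ofNat, im_ofNat]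
  ring

theorem sq_norm_div_conj_sub_of_sq_norm_sub {s : ℝ} {α ζ : ℂ}
    (h : ‖ζ - α‖ ^ 2 = ‖α‖ ^ 2 - s) : ‖s / conj ζ - α‖ ^ 2 = ‖α‖ ^ 2 - s := by
  rcases eq_or_ne ζ 0 with rfl | hζ
  · simp only [zero_sub, norm_neg] at h
    simp only [map_zero, div_zero, zero_sub, norm_neg]
    linarith
  have hp : normSq ζ ≠ 0 := normSq_pos.2 hζ |>.ne'
  have hp_def := normSq_apply ζ
  rw [Complex.sq_norm, Complex.sq_norm] at h ⊢
  rw [normSq_apply (_ - α), normSq_apply α] at h ⊢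
  simp only [sub_re, sub_im, div_re, div_im, conj_re, conj_im, ofReal_re, ofReal_im,
    normSq_conj] at h ⊢
  field_simp
  linear_combination s * normSq ζ * h + (s * normSq ζ - s ^ 2) * hp_def

theorem norm_sub_le_norm_of_sq_norm_sub_le {s : ℝ} {α z : ℂ} (hs : 0 ≤ s)
    (h : ‖z - α‖ ^ 2 ≤ ‖α‖ ^ 2 - s) : ‖z - α‖ ≤ ‖α‖ :=
  sq_le_sq₀ (norm_nonneg _) (norm_nonneg _) |>.1 (by linarith)

theorem two_mul_sq_norm_half_sub_le (a c : ℂ) : 2 * ‖(a - c) / 2‖ ^ 2 ≤ ‖a‖ ^ 2 + ‖c‖ ^ 2 := by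
  have := norm_sub_le a c
  rw [norm_div, Complex.norm_two]
  nlinarith [norm_nonneg (a - c), sq_nonneg (‖a‖ - ‖c‖)]

end Complex

theorem EuclideanSpace.norm_sq_eq_add_add_sum_succ_succ {𝕜 : Type*} [RCLike 𝕜] {m : ℕ}
    (x : EuclideanSpace 𝕜 (Fin (m + 2))) :
    ‖x‖ ^ 2 = ‖x 0‖ ^ 2 + ‖x 1‖ ^ 2 + ∑ i : Fin m, ‖x i.succ.succ‖ ^ 2 := by
  rw [EuclideanSpace.norm_sq_eq, Fin.sum_univ_succ, Fin.sum_univ_succ, Fin.succ_zero_eq_one]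
  exact (add_assoc _ _ _).symm

section AnalyticDisc

variable {m : ℕ} (w : EuclideanSpace ℂ (Fin (m + 2)))

def discCenter : ℂ := (w 0 - conj (w 1)) / 2

def analyticDisc (ζ : ℂ) : EuclideanSpace ℂ (Fin (m + 2)) :=
  WithLp.toLp 2 (fun i => if i = 0 then ζ
    else if i = 1 then ((‖w 0‖ ^ 2 : ℝ) : ℂ) / ζ - 2 * conj (discCenter w)
    else w i)

@[simp]
theorem analyticDisc_apply_zero (ζ : ℂ) : analyticDisc w ζ 0 = ζ := rfl

@[simp]
theorem analyticDisc_apply_one (ζ : ℂ) :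
    analyticDisc w ζ 1 = ((‖w 0‖ ^ 2 : ℝ) : ℂ) / ζ - 2 * conj (discCenter w) := rfl

@[simp]
theorem analyticDisc_apply_succ_succ (ζ : ℂ) (i : Fin m) :
    analyticDisc w ζ i.succ.succ = w i.succ.succ := by
  simp [analyticDisc, Fin.succ_succ_ne_one]

theorem analyticDisc_self : analyticDisc w (w 0) = w := by
  have h2 : 2 * conj (discCenter w) = conj (w 0) - w 1 := by
    simp only [discCenter, map_div₀, map_sub, conj_conj, map_ofNat]
    ring
  ext i
  refine Fin.cases rfl (Fin.cases ?_ fun i => analyticDisc_apply_succ_succ w _ i) i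
  simp only [Fin.succ_zero_eq_one, analyticDisc_apply_one, ofReal_sq_norm_div_self, h2]
  ring

theorem rho1_analyticDisc {ζ : ℂ} (hζ : ζ ≠ 0) :
    rho1 m (analyticDisc w ζ) = ‖ζ - discCenter w‖ ^ 2 - (‖discCenter w‖ ^ 2 - ‖w 0‖ ^ 2) :=
  re_mul_div_sub_add_sq_norm _ _ hζ

theorem norm_analyticDisc_le {ζ : ℂ}
    (h : ‖ζ - discCenter w‖ ^ 2 = ‖discCenter w‖ ^ 2 - ‖w 0‖ ^ 2) :
    ‖analyticDisc w ζ‖ ≤ 2 * ‖w‖ := by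
  set α := discCenter w
  have hr : ‖ζ - α‖ ≤ ‖α‖ := norm_sub_le_norm_of_sq_norm_sub_le (sq_nonneg _) h.le
  have hζ : ‖ζ‖ ≤ 2 * ‖α‖ := by
    linarith [norm_le_norm_add_norm_sub' ζ α]
  have hη : ‖analyticDisc w ζ 1‖ ≤ 2 * ‖α‖ := by
    set ζ' := ((‖w 0‖ ^ 2 : ℝ) : ℂ) / conj ζ
    have hr' : ‖ζ' - α‖ ≤ ‖α‖ := norm_sub_le_norm_of_sq_norm_sub_le (sq_nonneg _)
      (sq_norm_div_conj_sub_of_sq_norm_sub h).le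
    have hconj : analyticDisc w ζ 1 = conj ((ζ' - α) - α) := by
      simp only [analyticDisc_apply_one, ζ', map_sub, map_div₀, conj_ofReal, conj_conj]
      ring
    rw [hconj, norm_conj]
    linarith [norm_sub_le (ζ' - α) α]
  have hα : 2 * ‖α‖ ^ 2 ≤ ‖w 0‖ ^ 2 + ‖w 1‖ ^ 2 := by
    have h := two_mul_sq_norm_half_sub_le (w 0) (conj (w 1))
    rwa [norm_conj] at h
  have hsq : ‖analyticDisc w ζ‖ ^ 2 ≤ (2 * ‖w‖) ^ 2 := by
    rw [mul_pow, EuclideanSpace.norm_sq_eq_add_add_sum_succ_succ,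
      EuclideanSpace.norm_sq_eq_add_add_sum_succ_succ w]
    simp only [analyticDisc_apply_zero, analyticDisc_apply_succ_succ]
    have hrest : 0 ≤ ∑ i : Fin m, ‖w i.succ.succ‖ ^ 2 := by positivity
    nlinarith [norm_nonneg ζ, norm_nonneg (analyticDisc w ζ 1)]
  exact sq_le_sq₀ (norm_nonneg _) (by positivity) |>.1 hsq

end AnalyticDisc

/-- The analytic disc `φ_w` attached to `M₁ = {ρ₁ = 0}` through a point
`w` with `ρ₁(w) < 0`: well-definedness, `φ_w(w₁) = w`, the formula for `ρ₁ ∘ φ_w`, and the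
boundary bound `‖φ_w(ζ)‖ ≤ 3‖w‖`. -/
theorem analytic_disc_attached_to_M1 (m : ℕ) (w : EuclideanSpace ℂ (Fin (m + 2)))
    (hw : rho1 m w < 0) :
    let α : ℂ := (w 0 - (starRingEnd ℂ) (w 1)) / 2
    let S : Set ℂ := {ζ : ℂ | ‖ζ - α‖ ^ 2 ≤ ‖α‖ ^ 2 - ‖w 0‖ ^ 2}
    let φ : ℂ → EuclideanSpace ℂ (Fin (m + 2)) := fun ζ =>
      WithLp.toLp 2 (fun i => if i = 0 then ζ
        else if i = 1 then ((‖w 0‖ ^ 2 : ℝ) : ℂ) / ζ - 2 * (starRingEnd ℂ) α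
        else w i)
    -- (a)
    (w 0 ≠ 0) ∧ ‖w 0 - α‖ ^ 2 < ‖α‖ ^ 2 - ‖w 0‖ ^ 2 ∧
    -- (b)
    ((0 : ℂ) ∉ S) ∧
    -- (c)
    (φ (w 0) = w) ∧
    -- (d)
    (∀ ζ ∈ S, rho1 m (φ ζ) = ‖ζ - α‖ ^ 2 - (‖α‖ ^ 2 - ‖w 0‖ ^ 2)) ∧
    -- (e)
    (∀ ζ : ℂ, ‖ζ - α‖ ^ 2 = ‖α‖ ^ 2 - ‖w 0‖ ^ 2 → ‖φ ζ‖ ≤ 3 * ‖w‖) := by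
  intro α S φ
  have hw0 : w 0 ≠ 0 := by
    rintro h
    simp [rho1, h] at hw
  have hinterior : ‖w 0 - discCenter w‖ ^ 2 < ‖discCenter w‖ ^ 2 - ‖w 0‖ ^ 2 := by
    have h := rho1_analyticDisc w hw0
    rw [analyticDisc_self] at h
    linarith
  have hzero : (0 : ℂ) ∉ S := fun h0 => by
    have h : ‖0 - discCenter w‖ ^ 2 ≤ ‖discCenter w‖ ^ 2 - ‖w 0‖ ^ 2 := h0
    rw [zero_sub, norm_neg] at h
    linarith [pow_pos (norm_pos_iff.2 hw0) 2]
  have hne : ∀ ζ ∈ S, ζ ≠ 0 := fun ζ hζ h => hzero (h ▸ hζ)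
  refine ⟨hw0, hinterior, hzero, analyticDisc_self w,
    fun ζ hζ => rho1_analyticDisc w (hne ζ hζ), fun ζ hζ => ?_⟩
  exact (norm_analyticDisc_le w hζ).trans (by linarith [norm_nonneg w])
end
end

section
/- Let n ≥ 2 and write w = (w₁, w₂, w̃) ∈ ℂ × ℂ × ℂ^{n−2}. Let ρ₁(w) = Re(w₁w₂) + |w₁|², and suppose ρ₁(w) < 0 and ‖w‖ < 1/3 (Euclidean norm). With α = (w₁ − conj(w₂))/2, Σ_w = { ζ ∈ ℂ : |ζ − α|² ≤ |α|² − |w₁|² } and φ_w(ζ) = ( ζ, |w₁|²/ζ − 2·conj(α), w̃ ), one has ‖φ_w(ζ)‖ ≤ 3‖w‖ < 1 for every ζ ∈ Σ_w; in particular the analytic disc D_w = φ_w(Σ_w) is contained in the open unit ball of ℂ^n. -/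
open Complex

noncomputable section

/-! For `ζ ∈ Σ_w`, expanding `‖ζ - α‖ ≥ |‖ζ‖ - ‖α‖|` gives `‖ζ‖² + |w₁|² ≤ 2‖α‖‖ζ‖`, i.e.
`|w₁|²/‖ζ‖ ≤ 2‖α‖ - ‖ζ‖`. Hence the first two coordinates of `φ_w(ζ)` have norms summing to at most
`4‖α‖ ≤ 2(|w₁| + |w₂|)`, so their squares sum to at most `8(|w₁|² + |w₂|²)`; the remaining
coordinates are those of `w`, which gives `‖φ_w(ζ)‖² ≤ 9‖w‖²`. -/

theorem norm_sq_add_le_of_norm_sub_sq_le {E : Type*} [SeminormedAddCommGroup E] {ζ α : E}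
    {r : ℝ} (h : ‖ζ - α‖ ^ 2 ≤ ‖α‖ ^ 2 - r) : ‖ζ‖ ^ 2 + r ≤ 2 * ‖α‖ * ‖ζ‖ := by
  have : (‖ζ‖ - ‖α‖) ^ 2 ≤ ‖ζ - α‖ ^ 2 := by
    rw [← sq_abs]
    exact pow_le_pow_left₀ (abs_nonneg _) (abs_norm_sub_norm_le ζ α) 2
  nlinarith

section RCLike

variable {𝕜 : Type*} [RCLike 𝕜]

theorem norm_ofReal_div_le_of_norm_sub_sq_le {ζ α : 𝕜} {r : ℝ} (hr : 0 ≤ r)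
    (h : ‖ζ - α‖ ^ 2 ≤ ‖α‖ ^ 2 - r) : ‖(r : 𝕜) / ζ‖ ≤ 2 * ‖α‖ - ‖ζ‖ := by
  rcases eq_or_ne ζ 0 with rfl | hζ
  · simp
  rw [norm_div, RCLike.norm_ofReal, abs_of_nonneg hr, div_le_iff₀ (norm_pos_iff.2 hζ)]
  nlinarith [norm_sq_add_le_of_norm_sub_sq_le h]

theorem norm_add_norm_ofReal_div_sub_le_of_norm_sub_sq_le {ζ α : 𝕜} {r : ℝ} (hr : 0 ≤ r)
    (h : ‖ζ - α‖ ^ 2 ≤ ‖α‖ ^ 2 - r) :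
    ‖ζ‖ + ‖(r : 𝕜) / ζ - 2 * starRingEnd 𝕜 α‖ ≤ 4 * ‖α‖ := by
  have hsub := norm_sub_le ((r : 𝕜) / ζ) (2 * starRingEnd 𝕜 α)
  rw [norm_mul, RCLike.norm_conj, RCLike.norm_two] at hsub
  linarith [norm_ofReal_div_le_of_norm_sub_sq_le hr h]

theorem norm_sub_conj_div_two_le (a b : 𝕜) : 2 * ‖(a - starRingEnd 𝕜 b) / 2‖ ≤ ‖a‖ + ‖b‖ := by
  rw [norm_div, RCLike.norm_two, mul_div_cancel₀ _ two_ne_zero, ← RCLike.norm_conj b]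
  exact norm_sub_le a _

variable {m : ℕ}

theorem EuclideanSpace.norm_sq_eq_fin_add_two (v : EuclideanSpace 𝕜 (Fin (m + 2))) :
    ‖v‖ ^ 2 = ‖v 0‖ ^ 2 + ‖v 1‖ ^ 2 + ∑ i : Fin m, ‖v i.succ.succ‖ ^ 2 := by
  rw [EuclideanSpace.norm_sq_eq, Fin.sum_univ_succ, Fin.sum_univ_succ, Fin.succ_zero_eq_one]
  ring

theorem EuclideanSpace.norm_le_three_mul_of_tail_eq {u v : EuclideanSpace 𝕜 (Fin (m + 2))}
    (htail : ∀ i : Fin m, u i.succ.succ = v i.succ.succ)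
    (hhead : ‖u 0‖ + ‖u 1‖ ≤ 2 * (‖v 0‖ + ‖v 1‖)) : ‖u‖ ≤ 3 * ‖v‖ := by
  refine le_of_pow_le_pow_left₀ two_ne_zero (by positivity) ?_
  have hu0 := norm_nonneg (u 0)
  have hu1 := norm_nonneg (u 1)
  have hhead_sq : (‖u 0‖ + ‖u 1‖) ^ 2 ≤ (2 * (‖v 0‖ + ‖v 1‖)) ^ 2 :=
    pow_le_pow_left₀ (by positivity) hhead 2
  have htail_nonneg : 0 ≤ ∑ i : Fin m, ‖v i.succ.succ‖ ^ 2 := by positivity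
  rw [mul_pow, norm_sq_eq_fin_add_two, norm_sq_eq_fin_add_two]
  simp only [htail]
  nlinarith [sq_nonneg (‖v 0‖ - ‖v 1‖)]

end RCLike

theorem disc_in_unit_ball_general (m : ℕ) (w : EuclideanSpace ℂ (Fin (m + 2)))
    (hwn : ‖w‖ < 1 / 3) :
    let α : ℂ := (w 0 - (starRingEnd ℂ) (w 1)) / 2
    let S : Set ℂ := {ζ : ℂ | ‖ζ - α‖ ^ 2 ≤ ‖α‖ ^ 2 - ‖w 0‖ ^ 2}
    let φ : ℂ → EuclideanSpace ℂ (Fin (m + 2)) := fun ζ =>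
      WithLp.toLp 2 (fun i => if i = 0 then ζ
        else if i = 1 then ((‖w 0‖ ^ 2 : ℝ) : ℂ) / ζ - 2 * (starRingEnd ℂ) α
        else w i)
    (∀ ζ ∈ S, ‖φ ζ‖ ≤ 3 * ‖w‖) ∧ 3 * ‖w‖ < 1 := by
  intro α S φ
  refine ⟨fun ζ hζ => EuclideanSpace.norm_le_three_mul_of_tail_eq (fun i => ?_) ?_, by linarith⟩
  · simp [φ, Fin.succ_succ_ne_one]
  · calc ‖φ ζ 0‖ + ‖φ ζ 1‖ = ‖ζ‖ + ‖((‖w 0‖ ^ 2 : ℝ) : ℂ) / ζ - 2 * starRingEnd ℂ α‖ := by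
          simp [φ]
      _ ≤ 4 * ‖α‖ := norm_add_norm_ofReal_div_sub_le_of_norm_sub_sq_le (sq_nonneg _) hζ
      _ ≤ 2 * (‖w 0‖ + ‖w 1‖) := by linarith [norm_sub_conj_div_two_le (w 0) (w 1)]

/-- For `w` with `ρ₁(w) < 0` and `‖w‖ < 1/3`, the whole analytic disc
`D_w = φ_w(Σ_w)` satisfies `‖φ_w(ζ)‖ ≤ 3‖w‖ < 1`, hence lies in the open unit ball. -/
theorem disc_in_unit_ball (m : ℕ) (w : EuclideanSpace ℂ (Fin (m + 2)))
    (hw : rho1 m w < 0) (hwn : ‖w‖ < 1 / 3) :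
    let α : ℂ := (w 0 - (starRingEnd ℂ) (w 1)) / 2
    let S : Set ℂ := {ζ : ℂ | ‖ζ - α‖ ^ 2 ≤ ‖α‖ ^ 2 - ‖w 0‖ ^ 2}
    let φ : ℂ → EuclideanSpace ℂ (Fin (m + 2)) := fun ζ =>
      WithLp.toLp 2 (fun i => if i = 0 then ζ
        else if i = 1 then ((‖w 0‖ ^ 2 : ℝ) : ℂ) / ζ - 2 * (starRingEnd ℂ) α
        else w i)
    (∀ ζ ∈ S, ‖φ ζ‖ ≤ 3 * ‖w‖) ∧ 3 * ‖w‖ < 1 :=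
  disc_in_unit_ball_general m w hwn
end
end

section
/- Let n ≥ 2. The set { z = (z₁, z₂, z̃) ∈ ℂ × ℂ × ℂ^{n−2} : Re(z₁z₂) + |z₁|² = 0 and z₁ ≠ 0 } is path-connected. -/
open Complex

/-!
The open set `{z₁ ≠ 0}` is the complement of a complex hyperplane, a real subspace of codimension
two, hence path-connected. On it, moving `z` along the `z₂`-axis by `-ρ₁(z)/z₁` is continuous and
lands in `M₁` (because `ρ₁(z) = Re(z₁z₂) + |z₁|²` is real-affine in `z₂` with linear part
`Re(z₁ ·)`), and it fixes the points of `M₁`. So `M₁ \ {z₁ = 0}` is a continuous image of a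
path-connected set.
-/

theorem IsPathConnected.of_retraction {X : Type*} [TopologicalSpace X] {s t : Set X} {r : X → X}
    (hs : IsPathConnected s) (hr : ContinuousOn r s) (hmaps : Set.MapsTo r s t) (hts : t ⊆ s)
    (hfix : Set.EqOn r id t) : IsPathConnected t := by
  have himage : r '' s = t := hmaps.image_subset.antisymm fun x hx => ⟨x, hts hx, hfix hx⟩
  exact himage ▸ hs.image' hr

theorem isPathConnected_setOf_ne_zero_of_surjective {F G : Type*} [AddCommGroup F] [Module ℝ F]
    [TopologicalSpace F] [IsTopologicalAddGroup F] [ContinuousSMul ℝ F] [AddCommGroup G]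
    [Module ℝ G] (f : F →ₗ[ℝ] G) (hf : Function.Surjective f) (hG : 1 < Module.rank ℝ G) :
    IsPathConnected {x | f x ≠ 0} := by
  have hcodim : 1 < Module.rank ℝ (F ⧸ LinearMap.ker f) := by
    rwa [← Cardinal.one_lt_lift_iff, (f.quotKerEquivOfSurjective hf).lift_rank_eq,
      Cardinal.one_lt_lift_iff]
  simpa only [Set.compl_def, SetLike.mem_coe, LinearMap.mem_ker] using
    isPathConnected_compl_of_one_lt_codim hcodim

theorem EuclideanSpace.isPathConnected_setOf_apply_ne_zero {ι : Type*} [Fintype ι] (i : ι) :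
    IsPathConnected {z : EuclideanSpace ℂ ι | z i ≠ 0} := by
  classical
  refine isPathConnected_setOf_ne_zero_of_surjective
    ((EuclideanSpace.proj i : EuclideanSpace ℂ ι →L[ℂ] ℂ).toLinearMap.restrictScalars ℝ)
    (fun c => ⟨EuclideanSpace.single i c, by simp⟩) ?_
  rw [Complex.rank_real_complex]
  norm_num

namespace EuclideanSpace

variable {ι : Type*} (i j : ι)

noncomputable def rho₁ (z : EuclideanSpace ℂ ι) : ℝ :=
  (z i * z j).re + ‖z i‖ ^ 2

variable [DecidableEq ι]

noncomputable def retractM₁ (z : EuclideanSpace ℂ ι) : EuclideanSpace ℂ ι :=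
  z - (rho₁ i j z / z i) • EuclideanSpace.single j 1

variable {i j}

theorem retractM₁_apply_left (hij : i ≠ j) (z : EuclideanSpace ℂ ι) :
    retractM₁ i j z i = z i := by
  simp [retractM₁, hij]

theorem retractM₁_apply_right (z : EuclideanSpace ℂ ι) :
    retractM₁ i j z j = z j - rho₁ i j z / z i := by
  simp [retractM₁]

theorem rho₁_retractM₁ (hij : i ≠ j) {z : EuclideanSpace ℂ ι} (hz : z i ≠ 0) :
    rho₁ i j (retractM₁ i j z) = 0 := by
  have hcancel : z i * (rho₁ i j z / z i) = rho₁ i j z := mul_div_cancel₀ _ hz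
  rw [rho₁, retractM₁_apply_left hij, retractM₁_apply_right, mul_sub, hcancel, sub_re, ofReal_re,
    rho₁]
  ring

theorem retractM₁_of_rho₁_eq_zero {z : EuclideanSpace ℂ ι} (h : rho₁ i j z = 0) :
    retractM₁ i j z = z := by
  simp [retractM₁, h]

theorem continuousOn_retractM₁ [Fintype ι] : ContinuousOn (retractM₁ i j) {z | z i ≠ 0} := by
  unfold retractM₁ rho₁
  fun_prop (disch := intro _ h; exact h)

theorem isPathConnected_setOf_rho₁_eq_zero_and_ne_zero [Fintype ι] (hij : i ≠ j) :
    IsPathConnected {z : EuclideanSpace ℂ ι | rho₁ i j z = 0 ∧ z i ≠ 0} :=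
  (isPathConnected_setOf_apply_ne_zero i).of_retraction continuousOn_retractM₁
    (fun z hz => ⟨rho₁_retractM₁ hij hz, (retractM₁_apply_left hij z).symm ▸ hz⟩)
    (fun _ hz => hz.2) (fun _ hz => retractM₁_of_rho₁_eq_zero hz.1)

end EuclideanSpace

/-- The set `M₁ \ {z₁ = 0}`, where
`M₁ = {z ∈ ℂ^n : Re(z₁ z₂) + |z₁|² = 0}` (and `n = m + 2 ≥ 2`), is path-connected. -/
theorem M1_minus_hyperplane_pathConnected (m : ℕ) :
    IsPathConnected {z : EuclideanSpace ℂ (Fin (m + 2)) |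
      (z 0 * z 1).re + ‖z 0‖ ^ 2 = 0 ∧ z 0 ≠ 0} :=
  EuclideanSpace.isPathConnected_setOf_rho₁_eq_zero_and_ne_zero zero_ne_one
end
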